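/- The class of languages generated by admissible signed grammars is closed under complementation: if L ⊆ Σ* is generated by an admissible signed grammar over Σ, then its complement Σ* \ L is also generated by an admissible signed grammar over Σ. -/

import Mathlib

/-- A parse-tree node: either a terminal leaf or an internal node labeled by a
nonterminal with a list of children. -/
inductive PTree (N : Type) (T : Type) : Type where
  | leaf (t : T) : PTree N T
  | node (A : N) (children : List (PTree N T)) : PTree N T

namespace PTree

variable {N T : Type}

/-- The symbol (nonterminal or terminal) labeling the root of a tree. -/
def toSymbol : PTree N T → N ⊕ T
  | leaf t => Sum.inr t
  | node A _ => Sum.inl A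

/-- The yield of a parse tree: the word spelled by its leaves. -/
def yield : PTree N T → List T
  | leaf t => [t]
  | node _ cs => cs.attach.flatMap (fun c => yield c.1)
decreasing_by simp only [PTree.node.sizeOf_spec]; have h := List.sizeOf_lt_of_mem c.2; omega

/-- The sign of a parse tree w.r.t. a sign assignment on productions:
the product of the signs of the productions used at its nodes. -/
def sign (σ : N × List (N ⊕ T) → ℤ) : PTree N T → ℤ
  | leaf _ => 1
  | node A cs => σ (A, cs.map toSymbol) * (cs.attach.map (fun c => sign σ c.1)).prod
decreasing_by simp only [PTree.node.sizeOf_spec]; have h := List.sizeOf_lt_of_mem c.2; omega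

/-- Validity of a parse tree w.r.t. a set of productions: at every internal node,
the node label together with the list of symbols of its children is a production. -/
inductive Valid (R : Set (N × List (N ⊕ T))) : PTree N T → Prop where
  | leaf (t : T) : Valid R (PTree.leaf t)
  | node (A : N) (cs : List (PTree N T)) :
      (A, cs.map toSymbol) ∈ R → (∀ c ∈ cs, Valid R c) → Valid R (PTree.node A cs)

end PTree

/-- A signed grammar over a (finite) terminal alphabet `T`: a context-free grammar
with finitely many nonterminals and productions, together with a sign `1` or `-1`
attached to each production. -/
structure SignedGrammar (T : Type) : Type 1 where
  /-- the type of nonterminals -/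
  N : Type
  finN : Finite N
  /-- the start symbol -/
  start : N
  /-- the productions `A → α`, `α ∈ (N ∪ T)*` -/
  rules : Set (N × List (N ⊕ T))
  finRules : rules.Finite
  /-- the sign of each production -/
  sign : N × List (N ⊕ T) → ℤ
  sign_valid : ∀ r ∈ rules, sign r = 1 ∨ sign r = -1

namespace SignedGrammar

variable {T : Type}

/-- A parse tree over the grammar: a valid tree whose root is labeled by the start symbol. -/
def IsParseTree (G : SignedGrammar T) (t : PTree G.N T) : Prop :=
  PTree.Valid G.rules t ∧ t.toSymbol = Sum.inl G.start

/-- The set of parse trees over `G` with yield `w`. -/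
def parseTreesOf (G : SignedGrammar T) (w : List T) : Set (PTree G.N T) :=
  {t | G.IsParseTree t ∧ t.yield = w}

/-- `G` is admissible if every word has only finitely many parse trees. -/
def Admissible (G : SignedGrammar T) : Prop :=
  ∀ w : List T, (G.parseTreesOf w).Finite

/-- `n_w(G)`: the sum of the signs of all parse trees over `G` with yield `w`. -/
noncomputable def count (G : SignedGrammar T) (w : List T) : ℤ :=
  ∑ᶠ t ∈ G.parseTreesOf w, t.sign G.sign

/-- `G` generates the language `L` if `G` is admissible, `n_w(G) = 1` for every
`w ∈ L` and `n_w(G) = 0` for every `w ∉ L`. -/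
def Generates (G : SignedGrammar T) (L : Language T) : Prop :=
  G.Admissible ∧ (∀ w ∈ L, G.count w = 1) ∧ (∀ w ∉ L, G.count w = 0)

/-- An ordinary context-free grammar: every production has sign `+1`. -/
def Ordinary (G : SignedGrammar T) : Prop :=
  ∀ r ∈ G.rules, G.sign r = 1

/-- The language generated by `G` in the usual sense: all yields of parse trees. -/
def language (G : SignedGrammar T) : Language T :=
  {w | ∃ t : PTree G.N T, G.IsParseTree t ∧ t.yield = w}

/-- `G` is unambiguous if every word has at most one parse tree. -/
def Unambiguous (G : SignedGrammar T) : Prop :=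
  ∀ t₁ t₂ : PTree G.N T, G.IsParseTree t₁ → G.IsParseTree t₂ →
    t₁.yield = t₂.yield → t₁ = t₂

/-- The number of parse trees of `G` with yield `w` (degree of ambiguity of `w`). -/
noncomputable def ambCount (G : SignedGrammar T) (w : List T) : ℕ :=
  Nat.card {t : PTree G.N T // t ∈ G.parseTreesOf w}

end SignedGrammar

/-!
Signed grammars are closed under finite signed sums: a fresh start symbol `S` with productions
`S → Sᵢ` of sign `εᵢ` on top of disjoint copies of grammars `Gᵢ` has as parse trees exactly the
trees `S(uᵢ)` with `uᵢ` a parse tree of `Gᵢ`, so `n_w = Σᵢ εᵢ n_w(Gᵢ)`. The grammar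
`A → ε | aA` parses every word exactly once, with all signs `+1`; adding it with sign `+1` to `G`
with sign `-1` gives `n_w = 1 - n_w(G)`, which is `1` off `L` and `0` on `L`.
-/

theorem List.exists_map_eq_of_forall_mem {α β : Type*} {g : α → β} {p : α → Prop} :
    ∀ {l : List β}, (∀ b ∈ l, ∃ a, p a ∧ g a = b) →
      ∃ l' : List α, (∀ a ∈ l', p a) ∧ l'.map g = l
  | [], _ => ⟨[], by simp⟩
  | b :: l, h => by
    obtain ⟨a, ha, rfl⟩ := h b List.mem_cons_self
    obtain ⟨l', hl', rfl⟩ := exists_map_eq_of_forall_mem fun b hb => h b (List.mem_cons_of_mem _ hb)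
    exact ⟨a :: l', by simpa using ⟨ha, hl'⟩, rfl⟩

namespace PTree

variable {N M T : Type}

@[elab_as_elim, induction_eliminator]
theorem induction {motive : PTree N T → Prop} (leaf : ∀ t, motive (leaf t))
    (node : ∀ A cs, (∀ c ∈ cs, motive c) → motive (node A cs)) : ∀ t, motive t
  | .leaf t => leaf t
  | .node A cs => node A cs fun c _ => induction leaf node c

@[simp] theorem toSymbol_leaf (t : T) : (leaf t : PTree N T).toSymbol = .inr t := rfl

@[simp] theorem toSymbol_node (A : N) (cs : List (PTree N T)) :
    (node A cs).toSymbol = .inl A := rfl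

@[simp] theorem yield_leaf (t : T) : (leaf t : PTree N T).yield = [t] := by
  rw [yield]

@[simp] theorem yield_node (A : N) (cs : List (PTree N T)) :
    (node A cs).yield = cs.flatMap yield := by
  rw [yield]
  simp

@[simp] theorem sign_leaf (σ : N × List (N ⊕ T) → ℤ) (t : T) :
    (leaf t : PTree N T).sign σ = 1 := by
  rw [sign]

@[simp] theorem sign_node (σ : N × List (N ⊕ T) → ℤ) (A : N) (cs : List (PTree N T)) :
    (node A cs).sign σ = σ (A, cs.map toSymbol) * (cs.map (sign σ)).prod := by
  rw [sign]
  simp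

theorem sign_const_one (t : PTree N T) : t.sign (fun _ => 1) = 1 := by
  induction t with
  | leaf t => simp
  | node A cs ih => simp [List.map_congr_left ih]

def mapRule (f : N → M) : N × List (N ⊕ T) → M × List (M ⊕ T) :=
  Prod.map f (List.map (Sum.map f id))

def map (f : N → M) : PTree N T → PTree M T
  | leaf t => leaf t
  | node A cs => node (f A) (cs.map (map f))

variable (f : N → M)

@[simp] theorem map_leaf (t : T) : (leaf t).map f = leaf t := by rw [map]

@[simp] theorem map_node (A : N) (cs : List (PTree N T)) :
    (node A cs).map f = node (f A) (cs.map (map f)) := by rw [map]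

@[simp] theorem toSymbol_map (t : PTree N T) : (t.map f).toSymbol = Sum.map f id t.toSymbol := by
  cases t <;> simp

@[simp] theorem yield_map (t : PTree N T) : (t.map f).yield = t.yield := by
  induction t with
  | leaf t => simp
  | node A cs ih => simp [List.flatMap_map, List.flatMap_congr ih]

theorem map_toSymbol_map (cs : List (PTree N T)) :
    (cs.map (map f)).map toSymbol = (cs.map toSymbol).map (Sum.map f id) := by
  simp

theorem sign_map {σ : N × List (N ⊕ T) → ℤ} {σ' : M × List (M ⊕ T) → ℤ}
    (hσ : ∀ r, σ' (mapRule f r) = σ r) (t : PTree N T) : (t.map f).sign σ' = t.sign σ := by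
  induction t with
  | leaf t => simp
  | node A cs ih =>
    have := hσ (A, cs.map toSymbol)
    simp only [mapRule, Prod.map] at this
    rw [map_node, sign_node, sign_node, map_toSymbol_map, this, List.map_map]
    exact congrArg (_ * List.prod ·) (List.map_congr_left ih)

variable {f}

theorem Valid.map {R : Set (N × List (N ⊕ T))} {R' : Set (M × List (M ⊕ T))}
    (hR : ∀ r ∈ R, mapRule f r ∈ R') {t : PTree N T} (ht : t.Valid R) : (t.map f).Valid R' := by
  induction t with
  | leaf t => simpa using Valid.leaf t
  | node A cs ih =>
    cases ht with
    | node _ _ hr hcs =>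
      refine map_node f A cs ▸ .node _ _ ?_ ?_
      · rw [map_toSymbol_map]
        exact hR _ hr
      · simpa using fun c hc => ih c hc (hcs c hc)

theorem map_injective (hf : Function.Injective f) :
    Function.Injective (map f : PTree N T → PTree M T) := by
  intro t
  induction t with
  | leaf t => intro u h; cases u <;> simp_all
  | node A cs ih =>
    intro u h
    cases u with
    | leaf t => simp at h
    | node B ds =>
      simp only [map_node, node.injEq, hf.eq_iff] at h ⊢
      refine ⟨h.1, ?_⟩
      obtain ⟨-, hcsds⟩ := h
      induction cs generalizing ds with
      | nil => exact (List.map_eq_nil_iff.1 hcsds.symm).symm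
      | cons c cs ihcs =>
        cases ds with
        | nil => simp at hcsds
        | cons d ds =>
          simp only [List.map_cons, List.cons.injEq] at hcsds
          exact congrArg₂ _ (ih c List.mem_cons_self hcsds.1)
            (ihcs (fun c hc => ih c (List.mem_cons_of_mem _ hc)) _ hcsds.2)

theorem exists_map_eq_of_valid (hf : Function.Injective f) {R : Set (N × List (N ⊕ T))}
    {R' : Set (M × List (M ⊕ T))} (hR : ∀ A α, (f A, α) ∈ R' → (f A, α) ∈ mapRule f '' R)
    {t' : PTree M T} (ht' : t'.Valid R') (hroot : t'.toSymbol ∈ Set.range (Sum.map f id)) :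
    ∃ t : PTree N T, t.Valid R ∧ t.map f = t' := by
  induction t' with
  | leaf t => exact ⟨leaf t, .leaf t, by simp⟩
  | node B cs ih =>
    obtain ⟨A, rfl⟩ : ∃ A, B = f A := by
      obtain ⟨_ | _, h⟩ := hroot <;> simp at h
      exact ⟨_, h.symm⟩
    cases ht' with
    | node _ _ hr hcs =>
      obtain ⟨⟨A', β⟩, hβ, hrule⟩ := hR _ _ hr
      simp only [mapRule, Prod.map, Prod.mk.injEq, hf.eq_iff] at hrule
      obtain ⟨rfl, hβcs⟩ := hrule
      have hchildren : ∀ c ∈ cs, ∃ u : PTree N T, u.Valid R ∧ u.map f = c := fun c hc =>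
        ih c hc (hcs c hc) <| by
          obtain ⟨s, -, hs⟩ := List.mem_map.1 (hβcs ▸ List.mem_map_of_mem hc)
          exact ⟨s, hs⟩
      obtain ⟨us, hus, rfl⟩ := List.exists_map_eq_of_forall_mem hchildren
      refine ⟨node _ us, .node _ _ ?_ hus, map_node f _ us⟩
      have hsym : us.map toSymbol = β := by
        apply List.map_injective_iff.2 (Sum.map_injective.2 ⟨hf, Function.injective_id⟩)
        rw [hβcs, map_toSymbol_map]
      exact hsym ▸ hβ

theorem mapRule_injective (hf : Function.Injective f) :
    Function.Injective (mapRule f : N × List (N ⊕ T) → M × List (M ⊕ T)) :=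
  hf.prodMap (List.map_injective_iff.2 (Sum.map_injective.2 ⟨hf, Function.injective_id⟩))

end PTree

namespace SignedGrammar

open PTree

section SignedSum

variable {T ι : Type} (G : ι → SignedGrammar T)

def sumEmbed (i : ι) (A : (G i).N) : Option (Σ j, (G j).N) := some ⟨i, A⟩

theorem sumEmbed_injective (i : ι) : Function.Injective (sumEmbed G i) :=
  (Option.some_injective _).comp sigma_mk_injective

def sumTree (i : ι) (u : PTree (G i).N T) : PTree (Option (Σ j, (G j).N)) T :=
  node none [u.map (sumEmbed G i)]

theorem sumTree_injective (i : ι) : Function.Injective (sumTree G i) :=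
  fun u v h => map_injective (sumEmbed_injective G i) (by simpa [sumTree] using h)

variable {G}

@[simp] theorem yield_sumTree (i : ι) (u : PTree (G i).N T) : (sumTree G i u).yield = u.yield := by
  simp [sumTree]

theorem toSymbol_map_sumEmbed {i : ι} {u : PTree (G i).N T} (hu : (G i).IsParseTree u) :
    (u.map (sumEmbed G i)).toSymbol = .inl (sumEmbed G i (G i).start) := by
  rw [toSymbol_map, hu.2]
  rfl

theorem pairwise_disjoint_image_sumTree (w : List T) :
    Pairwise (Function.onFun Disjoint fun i => sumTree G i '' (G i).parseTreesOf w) := by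
  refine fun i j hij => Set.disjoint_left.2 ?_
  rintro _ ⟨u, ⟨hu, -⟩, rfl⟩ ⟨v, ⟨hv, -⟩, huv⟩
  have hroots := congrArg toSymbol (List.cons.inj (node.inj huv).2).1
  rw [toSymbol_map_sumEmbed hu, toSymbol_map_sumEmbed hv] at hroots
  exact hij (Sigma.mk.inj_iff.1 (Option.some.inj (Sum.inl.inj hroots))).1.symm

variable (G) [Finite ι] (ε : ι → ℤˣ)

/-- Reducible, so that `(signedSum G ε).N` unfolds to `Option (Σ i, (G i).N)` when rewriting. -/
noncomputable abbrev signedSum : SignedGrammar T where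
  N := Option (Σ i, (G i).N)
  finN := by have := fun i => (G i).finN; infer_instance
  start := none
  rules := Set.range (fun i => (none, [.inl (sumEmbed G i (G i).start)])) ∪
    ⋃ i, mapRule (sumEmbed G i) '' (G i).rules
  finRules := (Set.finite_range _).union (Set.finite_iUnion fun i => (G i).finRules.image _)
  sign
    | (none, [.inl (some ⟨i, _⟩)]) => ε i
    | (none, _) => 1
    | r@(some ⟨i, _⟩, _) => Function.extend (mapRule (sumEmbed G i)) (G i).sign 0 r
  sign_valid := by
    rintro _ (⟨i, rfl⟩ | hr)
    · rcases Int.units_eq_one_or (ε i) with h | h <;> simp [sumEmbed, h]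
    · obtain ⟨i, ⟨A, α⟩, hAα, rfl⟩ := Set.mem_iUnion.1 hr
      have hext := (mapRule_injective (sumEmbed_injective G i)).extend_apply (G i).sign 0 (A, α)
      change Function.extend _ _ _ (mapRule (sumEmbed G i) (A, α)) = 1 ∨
        Function.extend _ _ _ (mapRule (sumEmbed G i) (A, α)) = -1
      rw [hext]
      exact (G i).sign_valid _ hAα

variable {G ε}

theorem signedSum_sign_mapRule (i : ι) (r : (G i).N × List ((G i).N ⊕ T)) :
    (signedSum G ε).sign (mapRule (sumEmbed G i) r) = (G i).sign r :=
  (mapRule_injective (sumEmbed_injective G i)).extend_apply _ _ r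

theorem mapRule_mem_signedSum_rules {i : ι} {r : (G i).N × List ((G i).N ⊕ T)}
    (hr : r ∈ (G i).rules) : mapRule (sumEmbed G i) r ∈ (signedSum G ε).rules :=
  Or.inr (Set.mem_iUnion.2 ⟨i, r, hr, rfl⟩)

theorem eq_start_of_mem_signedSum_rules {α : List ((signedSum G ε).N ⊕ T)}
    (h : (none, α) ∈ (signedSum G ε).rules) : ∃ i, α = [.inl (sumEmbed G i (G i).start)] := by
  rcases h with ⟨i, hi⟩ | h
  · exact ⟨i, (congrArg Prod.snd hi).symm⟩
  · obtain ⟨j, r, -, hj⟩ := Set.mem_iUnion.1 h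
    exact absurd (congrArg Prod.fst hj) (Option.some_ne_none _)

theorem mem_image_of_mem_signedSum_rules {i : ι} {A : (G i).N} {α : List ((signedSum G ε).N ⊕ T)}
    (h : (sumEmbed G i A, α) ∈ (signedSum G ε).rules) :
    (sumEmbed G i A, α) ∈ mapRule (sumEmbed G i) '' (G i).rules := by
  rcases h with ⟨j, hj⟩ | h
  · cases hj
  · obtain ⟨j, ⟨B, β⟩, hBβ, hj⟩ := Set.mem_iUnion.1 h
    obtain ⟨rfl, hB⟩ := Sigma.mk.inj_iff.1 (Option.some.inj (congrArg Prod.fst hj))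
    obtain rfl := eq_of_heq hB
    exact ⟨_, hBβ, hj⟩

theorem isParseTree_sumTree {i : ι} {u : PTree (G i).N T} (hu : (G i).IsParseTree u) :
    (signedSum G ε).IsParseTree (sumTree G i u) := by
  refine ⟨.node _ _ ?_ ?_, rfl⟩
  · exact Or.inl ⟨i, congrArg (fun s => (none, [s])) (toSymbol_map_sumEmbed hu).symm⟩
  · rintro _ hc
    obtain rfl := List.mem_singleton.1 hc
    exact hu.1.map fun r hr => mapRule_mem_signedSum_rules hr

theorem exists_eq_sumTree_of_isParseTree {t : PTree (signedSum G ε).N T}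
    (ht : (signedSum G ε).IsParseTree t) :
    ∃ i, ∃ u : PTree (G i).N T, (G i).IsParseTree u ∧ t = sumTree G i u := by
  obtain ⟨hv, hroot⟩ := ht
  cases hv with
  | leaf => cases hroot
  | node A cs hr hcs =>
    obtain rfl : A = none := Sum.inl.inj hroot
    obtain ⟨i, hi⟩ := eq_start_of_mem_signedSum_rules hr
    obtain ⟨c, rfl, hc⟩ := List.map_eq_singleton_iff.1 hi
    obtain ⟨u, hu, rfl⟩ := exists_map_eq_of_valid (sumEmbed_injective G i)
      (fun _ _ h => mem_image_of_mem_signedSum_rules h) (hcs c List.mem_cons_self)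
      ⟨.inl (G i).start, hc.symm⟩
    refine ⟨i, u, ⟨hu, ?_⟩, rfl⟩
    apply Sum.map_injective.2 ⟨sumEmbed_injective G i, Function.injective_id⟩
    rw [← toSymbol_map]
    exact hc

theorem parseTreesOf_signedSum (w : List T) :
    (signedSum G ε).parseTreesOf w = ⋃ i, sumTree G i '' (G i).parseTreesOf w := by
  ext t
  simp only [Set.mem_iUnion, Set.mem_image, parseTreesOf, Set.mem_ofPred_eq]
  constructor
  · rintro ⟨ht, rfl⟩
    obtain ⟨i, u, hu, rfl⟩ := exists_eq_sumTree_of_isParseTree ht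
    exact ⟨i, u, ⟨hu, (yield_sumTree i u).symm⟩, rfl⟩
  · rintro ⟨i, u, ⟨hu, rfl⟩, rfl⟩
    exact ⟨isParseTree_sumTree hu, yield_sumTree i u⟩

theorem sign_sumTree {i : ι} {u : PTree (G i).N T} (hu : (G i).IsParseTree u) :
    (sumTree G i u).sign (signedSum G ε).sign = ε i * u.sign (G i).sign := by
  rw [sumTree, sign_node, List.map_singleton, List.map_singleton, List.prod_singleton,
    sign_map _ (signedSum_sign_mapRule i), toSymbol_map_sumEmbed hu]
  rfl

theorem admissible_signedSum (h : ∀ i, (G i).Admissible) : (signedSum G ε).Admissible := by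
  intro w
  rw [parseTreesOf_signedSum]
  exact Set.finite_iUnion fun i => (h i w).image _

theorem count_signedSum [Fintype ι] (h : ∀ i, (G i).Admissible) (w : List T) :
    (signedSum G ε).count w = ∑ i, ε i * (G i).count w := by
  rw [count, parseTreesOf_signedSum,
    finsum_mem_iUnion (pairwise_disjoint_image_sumTree w) fun i => (h i w).image _,
    finsum_eq_sum_of_fintype]
  refine Finset.sum_congr rfl fun i _ => ?_
  rw [finsum_mem_image (sumTree_injective G i).injOn, count, mul_finsum_mem,
    finsum_mem_congr rfl fun u hu => sign_sumTree hu.1]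

end SignedSum

section Univ

variable {T : Type}

def univTree : List T → PTree Unit T
  | [] => node () []
  | t :: w => node () [leaf t, univTree w]

@[simp] theorem yield_univTree (w : List T) : (univTree w).yield = w := by
  induction w with
  | nil => simp [univTree]
  | cons t w ih => simp [univTree, ih]

variable (T) [Finite T]

abbrev univ : SignedGrammar T where
  N := Unit
  finN := inferInstance
  start := ()
  rules := insert ((), []) (Set.range fun t => ((), [.inr t, .inl ()]))
  finRules := (Set.finite_range _).insert _
  sign _ := 1
  sign_valid _ _ := Or.inl rfl

variable {T}

theorem isParseTree_univTree (w : List T) : (univ T).IsParseTree (univTree w) := by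
  refine ⟨?_, by cases w <;> rfl⟩
  induction w with
  | nil => exact .node _ _ (Or.inl rfl) (by simp)
  | cons t w ih =>
    refine .node _ _ (Or.inr ⟨t, by cases w <;> rfl⟩) ?_
    simp only [List.mem_cons, List.not_mem_nil, or_false]
    rintro c (rfl | rfl)
    exacts [.leaf t, ih]

theorem eq_univTree_of_valid {t : PTree Unit T} (ht : t.Valid (univ T).rules)
    (hroot : t.toSymbol = .inl ()) : t = univTree t.yield := by
  induction t with
  | leaf => cases hroot
  | node A cs ih =>
    obtain _ | ⟨_, _, hr, hcs⟩ := ht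
    rcases hr with hr | ⟨a, hr⟩
    · obtain rfl : cs = [] := List.map_eq_nil_iff.1 (congrArg Prod.snd hr)
      simp [univTree]
    · obtain ⟨c₁, c₂, rfl, h₁, h₂⟩ :
          ∃ c₁ c₂, cs = [c₁, c₂] ∧ c₁.toSymbol = .inr a ∧ c₂.toSymbol = .inl () := by
        simpa [List.map_eq_cons_iff] using (congrArg Prod.snd hr).symm
      obtain rfl : c₁ = leaf a := by
        cases c₁ with
        | leaf b => cases h₁; rfl
        | node => cases h₁
      have hc₂ := ih c₂ (by simp) (hcs c₂ (by simp)) h₂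
      calc node A [leaf a, c₂] = node () [leaf a, univTree c₂.yield] := by rw [← hc₂]
        _ = univTree (node A [leaf a, c₂]).yield := by simp [univTree]

theorem parseTreesOf_univ (w : List T) : (univ T).parseTreesOf w = {univTree w} := by
  ext t
  simp only [parseTreesOf, Set.mem_ofPred_eq, Set.mem_singleton_iff]
  constructor
  · rintro ⟨⟨hv, hroot⟩, rfl⟩
    exact eq_univTree_of_valid hv hroot
  · rintro rfl
    exact ⟨isParseTree_univTree w, yield_univTree w⟩

theorem univ_generates : (univ T).Generates ⊤ := by
  refine ⟨fun w => parseTreesOf_univ w ▸ Set.finite_singleton _, fun w _ => ?_,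
    fun w hw => absurd trivial hw⟩
  rw [count, parseTreesOf_univ, finsum_mem_singleton]
  exact sign_const_one _

end Univ

section Complement

variable {T : Type} [Finite T]

noncomputable def complement (G : SignedGrammar T) : SignedGrammar T :=
  signedSum ![univ T, G] ![1, -1]

variable {G : SignedGrammar T}

theorem Admissible.complement (hG : G.Admissible) : G.complement.Admissible :=
  admissible_signedSum (Fin.forall_fin_two.2 ⟨univ_generates.1, hG⟩)

theorem count_complement (hG : G.Admissible) (w : List T) :
    G.complement.count w = 1 - G.count w := by
  rw [complement, count_signedSum (Fin.forall_fin_two.2 ⟨univ_generates.1, hG⟩), Fin.sum_univ_two]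
  simp [univ_generates.2.1 w trivial, sub_eq_add_neg]

theorem Generates.complement {L : Language T} (hG : G.Generates L) :
    G.complement.Generates Lᶜ := by
  obtain ⟨hadm, hL, hLc⟩ := hG
  refine ⟨hadm.complement, fun w hw => ?_, fun w hw => ?_⟩
  · rw [count_complement hadm, hLc w hw, sub_zero]
  · rw [count_complement hadm, hL w (not_not.1 hw), sub_self]

end Complement

end SignedGrammar

/-- Languages generated by admissible signed grammars are closed under complementation. -/
theorem signed_grammar_closed_under_complement
    (T : Type) [Fintype T] (L : Language T) (G : SignedGrammar T)
    (hG : G.Generates L) :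
    ∃ G' : SignedGrammar T, G'.Generates Lᶜ :=
  ⟨G.complement, hG.complement⟩
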